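/- Kernel bound for the 3-commutator, region χ₁: let |·| be a symmetric quasi-norm on a homogeneous group G and let 0 < τ < Q, 0 < δ < min{τ, 1}. Suppose the kernel k_τ(x,y,η) = |R_τ(η^{-1}y) − R_τ(η^{-1}x)| where R_τ is smooth away from 0, homogeneous of degree τ − Q, and satisfies the Lipschitz-type bound of Lemma 2.1. Then on the region where |y^{-1}x| < 2|η^{-1}y| and |y^{-1}x| < 2|η^{-1}x|, one has k_τ(x,y,η) ≤ C |η^{-1}y|^{τ−Q−δ} |y^{-1}x|^{δ} and also k_τ(x,y,η) ≤ C |η^{-1}x|^{τ−Q−δ} |y^{-1}x|^{δ}. -/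
import Mathlib

lemma aux11_pow {δ e A B : ℝ} (hδ1 : 0 < δ) (hδ2 : δ < 1) (hA : 0 < A) (hB : 0 ≤ B)
    (hBA : B ≤ 2 * A) : A ^ e * B ≤ 2 ^ (1 - δ) * A ^ (e + (1 - δ)) * B ^ δ := by
  have hAe : (0:ℝ) ≤ A ^ e := (Real.rpow_pos_of_pos hA e).le
  have hBsplit : B = B ^ δ * B ^ (1 - δ) := by
    rw [← Real.rpow_add' hB (by norm_num)]
    norm_num
  have h1 : B ^ (1 - δ) ≤ 2 ^ (1 - δ) * A ^ (1 - δ) := by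
    rw [← Real.mul_rpow (by norm_num) hA.le]
    exact Real.rpow_le_rpow hB hBA (by linarith)
  have h2 : A ^ e * A ^ (1 - δ) = A ^ (e + (1 - δ)) := (Real.rpow_add hA _ _).symm
  calc A ^ e * B = A ^ e * B ^ δ * B ^ (1 - δ) := by rw [mul_assoc, ← hBsplit]
    _ ≤ A ^ e * B ^ δ * (2 ^ (1 - δ) * A ^ (1 - δ)) := by
        apply mul_le_mul_of_nonneg_left h1
        exact mul_nonneg hAe (Real.rpow_nonneg hB δ)
    _ = 2 ^ (1 - δ) * (A ^ e * A ^ (1 - δ)) * B ^ δ := by ring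
    _ = 2 ^ (1 - δ) * A ^ (e + (1 - δ)) * B ^ δ := by rw [h2]

/-- kernel bound for the 3-commutator on the region `χ₁`
(`|y⁻¹x| < 2|η⁻¹y|` and `|y⁻¹x| < 2|η⁻¹x|`), using the Lipschitz-type bound
of Lemma 2.1 for the kernel `R_τ`, homogeneous of degree `τ - Q`. -/
theorem statement11
    {G : Type*} [Group G]
    (dil : ℝ → G → G) (g : G → ℝ) (Q τ δ : ℝ)
    (hQ : 0 < Q) (hτ1 : 0 < τ) (hτ2 : τ < Q) (hδ1 : 0 < δ) (hδ2 : δ < min τ 1)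
    (hg_nonneg : ∀ x, 0 ≤ g x) (hg_symm : ∀ x, g x⁻¹ = g x)
    (c C : ℝ) (hc0 : 0 < c) (hc1 : c < 1) (hC : 1 < C)
    (hlow : ∀ x y, c * (g x - g y) ≤ g (y * x))
    (hup : ∀ x y, g (y * x) ≤ C * (g x + g y))
    (R : G → ℝ)
    (hR_hom : ∀ r : ℝ, 0 < r → ∀ x, R (dil r x) = r ^ (τ - Q) * R x)
    (hR_lip : ∀ K : ℝ, 1 ≤ K → ∃ C₁ > 0, ∀ a b : G,
      K⁻¹ * g a ≤ g (a * b) → g (a * b) ≤ K * g a →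
      |R (a * b) - R a| ≤ C₁ * max (g (a * b) ^ (τ - Q - 1)) (g a ^ (τ - Q - 1)) * g b) :
    ∃ C₂ > 0, ∀ x y η : G,
      g (y⁻¹ * x) < 2 * g (η⁻¹ * y) → g (y⁻¹ * x) < 2 * g (η⁻¹ * x) →
      |R (η⁻¹ * y) - R (η⁻¹ * x)| ≤ C₂ * g (η⁻¹ * y) ^ (τ - Q - δ) * g (y⁻¹ * x) ^ δ ∧
      |R (η⁻¹ * y) - R (η⁻¹ * x)| ≤ C₂ * g (η⁻¹ * x) ^ (τ - Q - δ) * g (y⁻¹ * x) ^ δ := by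
  have hδ2' : δ < 1 := lt_of_lt_of_le hδ2 (min_le_right _ _)
  have h3C : (1:ℝ) ≤ 3 * C := by linarith
  have h3C0 : (0:ℝ) < 3 * C := by linarith
  obtain ⟨C₁, hC₁pos, hlip⟩ := hR_lip (3 * C) h3C
  have hMpos : (0:ℝ) < (3 * C) ^ (Q + 1 - τ) := Real.rpow_pos_of_pos h3C0 _
  refine ⟨C₁ * (3 * C) ^ (Q + 1 - τ) * 2 ^ (1 - δ), by positivity, ?_⟩
  intro x y η h1 h2
  set a := η⁻¹ * x with ha
  set b := x⁻¹ * y with hb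
  have hab : a * b = η⁻¹ * y := by
    rw [ha, hb]; group
  have hgb : g b = g (y⁻¹ * x) := by
    rw [show b = (y⁻¹ * x)⁻¹ by rw [hb]; group, hg_symm]
  have hgbi : g b⁻¹ = g b := hg_symm b
  have hgb0 : 0 ≤ g b := hg_nonneg b
  have hga_pos : 0 < g a := by
    have := hg_nonneg (y⁻¹ * x); linarith
  have hgab_pos : 0 < g (a * b) := by
    rw [hab]; have := hg_nonneg (y⁻¹ * x); linarith
  -- comparability
  have hba : g b < 2 * g a := by rw [hgb]; exact h2
  have hbab : g b < 2 * g (a * b) := by rw [hgb, hab]; exact h1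
  have hup1 : g (a * b) ≤ 3 * C * g a := by
    have := hup b a
    nlinarith [hC]
  have hup2 : (3 * C)⁻¹ * g a ≤ g (a * b) := by
    have h := hup b⁻¹ (a * b)
    rw [mul_inv_cancel_right] at h
    rw [hgbi] at h
    rw [inv_mul_le_iff₀ h3C0]
    nlinarith [hC]
  have hkey := hlip a b hup2 hup1
  have hlo1 : (3 * C)⁻¹ * g (a * b) ≤ g a := by
    rw [inv_mul_le_iff₀ h3C0]; linarith
  have hinv : ((3 * C)⁻¹ : ℝ) ^ (τ - Q - 1) = (3 * C) ^ (Q + 1 - τ) := by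
    rw [Real.inv_rpow h3C0.le, ← Real.rpow_neg h3C0.le, show -(τ - Q - 1) = Q + 1 - τ by ring]
  -- bound the max two ways
  have hmax1 : max (g (a * b) ^ (τ - Q - 1)) (g a ^ (τ - Q - 1))
      ≤ (3 * C) ^ (Q + 1 - τ) * g (a * b) ^ (τ - Q - 1) := by
    apply max_le
    · nlinarith [Real.one_le_rpow h3C (by linarith : (0:ℝ) ≤ Q + 1 - τ),
        (Real.rpow_pos_of_pos hgab_pos (τ - Q - 1)).le]
    · calc g a ^ (τ - Q - 1) ≤ ((3 * C)⁻¹ * g (a * b)) ^ (τ - Q - 1) :=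
            Real.rpow_le_rpow_of_nonpos (by positivity) hlo1 (by linarith)
        _ = (3 * C) ^ (Q + 1 - τ) * g (a * b) ^ (τ - Q - 1) := by
            rw [Real.mul_rpow (by positivity) hgab_pos.le, hinv]
  have hmax2 : max (g (a * b) ^ (τ - Q - 1)) (g a ^ (τ - Q - 1))
      ≤ (3 * C) ^ (Q + 1 - τ) * g a ^ (τ - Q - 1) := by
    apply max_le
    · calc g (a * b) ^ (τ - Q - 1) ≤ ((3 * C)⁻¹ * g a) ^ (τ - Q - 1) :=
            Real.rpow_le_rpow_of_nonpos (by positivity) hup2 (by linarith)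
        _ = (3 * C) ^ (Q + 1 - τ) * g a ^ (τ - Q - 1) := by
            rw [Real.mul_rpow (by positivity) hga_pos.le, hinv]
    · nlinarith [Real.one_le_rpow h3C (by linarith : (0:ℝ) ≤ Q + 1 - τ),
        (Real.rpow_pos_of_pos hga_pos (τ - Q - 1)).le]
  constructor
  · -- bound with g(η⁻¹y) = g(a*b)
    rw [← hab]
    calc |R (a * b) - R a| ≤ C₁ * max (g (a * b) ^ (τ - Q - 1)) (g a ^ (τ - Q - 1)) * g b :=
          hkey
      _ ≤ C₁ * ((3 * C) ^ (Q + 1 - τ) * g (a * b) ^ (τ - Q - 1)) * g b := by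
          apply mul_le_mul_of_nonneg_right _ hgb0
          exact mul_le_mul_of_nonneg_left hmax1 hC₁pos.le
      _ = C₁ * (3 * C) ^ (Q + 1 - τ) * (g (a * b) ^ (τ - Q - 1) * g b) := by ring
      _ ≤ C₁ * (3 * C) ^ (Q + 1 - τ) *
            (2 ^ (1 - δ) * g (a * b) ^ ((τ - Q - 1) + (1 - δ)) * g b ^ δ) := by
          apply mul_le_mul_of_nonneg_left
            (aux11_pow hδ1 hδ2' hgab_pos hgb0 hbab.le) (by positivity)
      _ = C₁ * (3 * C) ^ (Q + 1 - τ) * 2 ^ (1 - δ) * g (a * b) ^ (τ - Q - δ) * g (y⁻¹ * x) ^ δ := by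
          rw [show (τ - Q - 1) + (1 - δ) = τ - Q - δ by ring, hgb]; ring
  · -- bound with g(η⁻¹x) = g a
    rw [← hab]
    calc |R (a * b) - R a| ≤ C₁ * max (g (a * b) ^ (τ - Q - 1)) (g a ^ (τ - Q - 1)) * g b :=
          hkey
      _ ≤ C₁ * ((3 * C) ^ (Q + 1 - τ) * g a ^ (τ - Q - 1)) * g b := by
          apply mul_le_mul_of_nonneg_right _ hgb0
          exact mul_le_mul_of_nonneg_left hmax2 hC₁pos.le
      _ = C₁ * (3 * C) ^ (Q + 1 - τ) * (g a ^ (τ - Q - 1) * g b) := by ring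
      _ ≤ C₁ * (3 * C) ^ (Q + 1 - τ) *
            (2 ^ (1 - δ) * g a ^ ((τ - Q - 1) + (1 - δ)) * g b ^ δ) := by
          apply mul_le_mul_of_nonneg_left
            (aux11_pow hδ1 hδ2' hga_pos hgb0 hba.le) (by positivity)
      _ = C₁ * (3 * C) ^ (Q + 1 - τ) * 2 ^ (1 - δ) * g a ^ (τ - Q - δ) * g (y⁻¹ * x) ^ δ := by
          rw [show (τ - Q - 1) + (1 - δ) = τ - Q - δ by ring, hgb]; ring
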